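/- Team semantics coincides with single-world semantics on the full powerset model: for every classical modal Kripke model M=(W,R,V), every team X⊆W (including the empty team) and every MT₀⁻-formula φ, M,X⊨φ (team semantics) if and only if M•,X⊩•φ (satisfaction ⊩• at the point X in the full powerset model M• induced by M). -/

import Mathlib

/-- Classical modal formulas: α ::= p | ⊥ | ¬α | α∧α | α⊗α | α→α | □α | ◇α. -/
inductive CForm : Type where
  | var : ℕ → CForm
  | bot : CForm
  | neg : CForm → CForm
  | and : CForm → CForm → CForm
  | tensor : CForm → CForm → CForm
  | impl : CForm → CForm → CForm
  | box : CForm → CForm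
  | dia : CForm → CForm

/-- MT₀⁻-formulas (the dependence-atom-free fragment of full modal downward
closed team logic): φ ::= α | φ∧φ | φ⊗φ | φ∨φ | φ→φ | □φ | ◇φ with α classical.
Classical formulas are embedded structurally; the primitive classical negation
is represented by the constructor `cneg`. -/
inductive MTm : Type where
  | var : ℕ → MTm
  | bot : MTm
  | cneg : CForm → MTm
  | and : MTm → MTm → MTm
  | tensor : MTm → MTm → MTm
  | or : MTm → MTm → MTm
  | impl : MTm → MTm → MTm
  | box : MTm → MTm
  | dia : MTm → MTm

/-- The structural embedding of classical modal formulas into MT₀⁻ formulas. -/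
def CForm.toMTm : CForm → MTm
  | .var p => .var p
  | .bot => .bot
  | .neg α => .cneg α
  | .and α β => .and α.toMTm β.toMTm
  | .tensor α β => .tensor α.toMTm β.toMTm
  | .impl α β => .impl α.toMTm β.toMTm
  | .box α => .box α.toMTm
  | .dia α => .dia α.toMTm

/-- A (classical modal) Kripke model M = (W,R,V) with W nonempty. -/
structure KModel where
  W : Type
  ne : Nonempty W
  R : W → W → Prop
  V : ℕ → Set W

/-- R(X) = {w : ∃ v ∈ X, vRw}. -/
def KModel.img (M : KModel) (X : Set M.W) : Set M.W := {w | ∃ v ∈ X, M.R v w}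

/-- Y is a successor team of X: Y ⊆ R(X) and Y ∩ R(w) ≠ ∅ for every w ∈ X. -/
def KModel.succT (M : KModel) (X Y : Set M.W) : Prop :=
  Y ⊆ M.img X ∧ ∀ w ∈ X, ∃ u ∈ Y, M.R w u

/-- Team semantics for classical modal formulas. -/
def KModel.csat (M : KModel) : Set M.W → CForm → Prop
  | X, .var p => X ⊆ M.V p
  | X, .bot => X = ∅
  | X, .neg α => ∀ w ∈ X, ¬ M.csat {w} α
  | X, .and α β => M.csat X α ∧ M.csat X β
  | X, .tensor α β => ∃ Y Z, X = Y ∪ Z ∧ M.csat Y α ∧ M.csat Z β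
  | X, .impl α β => ∀ Y ⊆ X, M.csat Y α → M.csat Y β
  | X, .box α => M.csat (M.img X) α
  | X, .dia α => ∃ Y, M.succT X Y ∧ M.csat Y α

/-- Team semantics for MT₀⁻ formulas. -/
def KModel.sat (M : KModel) : Set M.W → MTm → Prop
  | X, .var p => X ⊆ M.V p
  | X, .bot => X = ∅
  | X, .cneg α => ∀ w ∈ X, ¬ M.csat {w} α
  | X, .and φ ψ => M.sat X φ ∧ M.sat X ψ
  | X, .tensor φ ψ => ∃ Y Z, X = Y ∪ Z ∧ M.sat Y φ ∧ M.sat Z ψ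
  | X, .or φ ψ => M.sat X φ ∨ M.sat X ψ
  | X, .impl φ ψ => ∀ Y ⊆ X, M.sat Y φ → M.sat Y ψ
  | X, .box φ => M.sat (M.img X) φ
  | X, .dia φ => ∃ Y, M.succT X Y ∧ M.sat Y φ

/-- The data of a tri-relation intuitionistic Kripke model: worlds, the
intuitionistic partial order ≥ (`ge w v` reads "v is accessible from w along ≥"),
a modal accessibility relation R, a ternary relation S interpreting the binary
diamond ⊗, and a valuation. -/
structure TriModel where
  W : Type
  ge : W → W → Prop
  R : W → W → Prop
  S : W → W → W → Prop
  V : ℕ → Set W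

/-- w is an ≥-endpoint. -/
def TriModel.isEnd (N : TriModel) (w : N.W) : Prop := ∀ v, N.ge w v → v = w

/-- Satisfaction ⊩• for classical modal formulas on a tri-relation intuitionistic
Kripke model (¬χ is interpreted as χ→⊥). -/
def TriModel.cbsat (N : TriModel) : N.W → CForm → Prop
  | w, .var p => w ∈ N.V p
  | w, .bot => N.isEnd w
  | w, .neg α => ∀ v, N.ge w v → N.cbsat v α → N.isEnd v
  | w, .and α β => N.cbsat w α ∧ N.cbsat w β
  | w, .tensor α β => ∃ u v, N.S w u v ∧ N.cbsat u α ∧ N.cbsat v β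
  | w, .impl α β => ∀ v, N.ge w v → N.cbsat v α → N.cbsat v β
  | w, .box α => ∀ u v, N.ge w u → N.R u v → N.cbsat v α
  | w, .dia α => ∃ v, N.R w v ∧ N.cbsat v α

/-- Satisfaction ⊩• for MT₀⁻ formulas on a tri-relation intuitionistic Kripke
model (¬χ is interpreted as χ→⊥). -/
def TriModel.bsat (N : TriModel) : N.W → MTm → Prop
  | w, .var p => w ∈ N.V p
  | w, .bot => N.isEnd w
  | w, .cneg α => ∀ v, N.ge w v → N.cbsat v α → N.isEnd v
  | w, .and φ ψ => N.bsat w φ ∧ N.bsat w ψ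
  | w, .tensor φ ψ => ∃ u v, N.S w u v ∧ N.bsat u φ ∧ N.bsat v ψ
  | w, .or φ ψ => N.bsat w φ ∨ N.bsat w ψ
  | w, .impl φ ψ => ∀ v, N.ge w v → N.bsat v φ → N.bsat v ψ
  | w, .box φ => ∀ u v, N.ge w u → N.R u v → N.bsat v φ
  | w, .dia φ => ∃ v, N.R w v ∧ N.bsat v φ

/-- The full powerset model M• induced by a Kripke model M: the worlds are all
teams of M (including the empty team), ordered by the superset relation, with the
successor-team relation as modal accessibility, R⊗(X,Y,Z) iff X=Y∪Z, and
X ∈ V°(p) iff X ⊆ V(p). -/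
def fullPowModel (M : KModel) : TriModel where
  W := Set M.W
  ge := fun X Y => Y ⊆ X
  R := fun X Y => M.succT X Y
  S := fun X Y Z => X = Y ∪ Z
  V := fun p => {X | X ⊆ M.V p}

/-!
In M• the order is ⊇, so the only endpoint is the empty team and the clauses for ¬ and □
quantify over all subteams of the current team; every other clause of ⊩• is the team clause
verbatim. Team semantics is downward closed, and that makes the quantification over subteams
harmless: no singleton of X satisfies α iff every subteam of X satisfying α is empty, and φ
holds in the image of every subteam of X iff it holds in R(X), which is itself a successor
team of the worlds of X that have a successor.
-/

theorem Set.eq_inter_union_inter_of_subset_union {α : Type*} {s t u : Set α}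
    (h : s ⊆ t ∪ u) : s = t ∩ s ∪ u ∩ s := by
  rw [← Set.union_inter_distrib_right, Set.inter_eq_right.2 h]

theorem Antitone.forall_not_singleton_iff {α : Type*} {P : Set α → Prop} (hP : Antitone P)
    {X : Set α} : (∀ w ∈ X, ¬ P {w}) ↔ ∀ Y ⊆ X, P Y → Y = ∅ := by
  refine ⟨fun h Y hYX hY => Set.eq_empty_of_forall_notMem fun w hw => ?_, fun h w hw hw' => ?_⟩
  · exact h w (hYX hw) (hP (Set.singleton_subset_iff.2 hw) hY)
  · exact Set.singleton_ne_empty w (h {w} (Set.singleton_subset_iff.2 hw) hw')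

namespace KModel

theorem succT_inter_img {M : KModel} {X Y Z : Set M.W} (hXZ : M.succT X Z) (hYX : Y ⊆ X) :
    M.succT Y (Z ∩ M.img Y) := by
  refine ⟨Set.inter_subset_right, fun w hw => ?_⟩
  obtain ⟨u, hu, hwu⟩ := hXZ.2 w (hYX hw)
  exact ⟨u, ⟨hu, w, hw, hwu⟩, hwu⟩

theorem succT_img_sep {M : KModel} (X : Set M.W) :
    M.succT {w ∈ X | ∃ u, M.R w u} (M.img X) := by
  refine ⟨?_, ?_⟩
  · rintro u ⟨v, hv, hvu⟩
    exact ⟨v, ⟨hv, u, hvu⟩, hvu⟩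
  · rintro w ⟨hw, u, hwu⟩
    exact ⟨u, ⟨w, hw, hwu⟩, hwu⟩

variable (M : KModel)

theorem img_mono : Monotone M.img := by
  rintro X Y hXY w ⟨v, hv, hvw⟩
  exact ⟨v, hXY hv, hvw⟩

theorem antitone_csat (α : CForm) : Antitone (M.csat · α) := by
  induction α with
  | var p => exact fun Y X hYX hX => hYX.trans hX
  | bot => exact fun Y X hYX hX => Set.subset_empty_iff.1 (hX ▸ hYX)
  | neg α => exact fun Y X hYX hX w hw => hX w (hYX hw)
  | and α β ih₁ ih₂ => exact fun Y X hYX hX => ⟨ih₁ hYX hX.1, ih₂ hYX hX.2⟩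
  | tensor α β ih₁ ih₂ =>
    rintro Y _ hYX ⟨A, B, rfl, hA, hB⟩
    exact ⟨A ∩ Y, B ∩ Y, Set.eq_inter_union_inter_of_subset_union hYX,
      ih₁ Set.inter_subset_left hA, ih₂ Set.inter_subset_left hB⟩
  | impl α β => exact fun Y X hYX hX Z hZY => hX Z (hZY.trans hYX)
  | box α ih => exact fun Y X hYX hX => ih (M.img_mono hYX) hX
  | dia α ih =>
    rintro Y X hYX ⟨Z, hXZ, hZ⟩
    exact ⟨Z ∩ M.img Y, succT_inter_img hXZ hYX, ih Set.inter_subset_left hZ⟩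

theorem antitone_sat (φ : MTm) : Antitone (M.sat · φ) := by
  induction φ with
  | var p => exact fun Y X hYX hX => hYX.trans hX
  | bot => exact fun Y X hYX hX => Set.subset_empty_iff.1 (hX ▸ hYX)
  | cneg α => exact fun Y X hYX hX w hw => hX w (hYX hw)
  | and φ ψ ih₁ ih₂ => exact fun Y X hYX hX => ⟨ih₁ hYX hX.1, ih₂ hYX hX.2⟩
  | tensor φ ψ ih₁ ih₂ =>
    rintro Y _ hYX ⟨A, B, rfl, hA, hB⟩
    exact ⟨A ∩ Y, B ∩ Y, Set.eq_inter_union_inter_of_subset_union hYX,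
      ih₁ Set.inter_subset_left hA, ih₂ Set.inter_subset_left hB⟩
  | or φ ψ ih₁ ih₂ => exact fun Y X hYX hX => hX.imp (ih₁ hYX) (ih₂ hYX)
  | impl φ ψ => exact fun Y X hYX hX Z hZY => hX Z (hZY.trans hYX)
  | box φ ih => exact fun Y X hYX hX => ih (M.img_mono hYX) hX
  | dia φ ih =>
    rintro Y X hYX ⟨Z, hXZ, hZ⟩
    exact ⟨Z ∩ M.img Y, succT_inter_img hXZ hYX, ih Set.inter_subset_left hZ⟩

end KModel

namespace fullPowModel

variable {M : KModel}

theorem isEnd_iff {X : Set M.W} : (fullPowModel M).isEnd X ↔ X = ∅ :=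
  ⟨fun h => (h (∅ : Set M.W) X.empty_subset).symm,
    fun h _ hYX => h ▸ Set.subset_empty_iff.1 (h ▸ hYX)⟩

theorem neg_iff {P : Set M.W → Prop} {Q : (fullPowModel M).W → Prop} (hP : Antitone P)
    (hPQ : ∀ Y, P Y ↔ Q Y) {X : Set M.W} :
    (∀ w ∈ X, ¬ P {w}) ↔ ∀ Y, (fullPowModel M).ge X Y → Q Y → (fullPowModel M).isEnd Y := by
  show _ ↔ ∀ Y : Set M.W, Y ⊆ X → Q Y → _
  simpa only [← hPQ, isEnd_iff] using hP.forall_not_singleton_iff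

theorem box_iff {P : Set M.W → Prop} {Q : (fullPowModel M).W → Prop} (hP : Antitone P)
    (hPQ : ∀ Y, P Y ↔ Q Y) {X : Set M.W} :
    P (M.img X) ↔ ∀ Y Z, (fullPowModel M).ge X Y → (fullPowModel M).R Y Z → Q Z := by
  show _ ↔ ∀ Y Z : Set M.W, Y ⊆ X → M.succT Y Z → Q Z
  simp only [← hPQ]
  exact ⟨fun h _ _ hYX hYZ => hP (hYZ.1.trans (M.img_mono hYX)) h,
    fun h => h _ _ (Set.sep_subset X _) (KModel.succT_img_sep X)⟩

end fullPowModel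

theorem csat_iff_cbsat (M : KModel) (X : Set M.W) (α : CForm) :
    M.csat X α ↔ (fullPowModel M).cbsat X α := by
  induction α generalizing X with
  | var p => exact Iff.rfl
  | bot => exact fullPowModel.isEnd_iff.symm
  | neg α ih => exact fullPowModel.neg_iff (M.antitone_csat α) ih
  | box α ih => exact fullPowModel.box_iff (M.antitone_csat α) ih
  | _ => simp only [KModel.csat, TriModel.cbsat, fullPowModel, *]

/-- STATEMENT 17: team semantics over M coincides with the single-world
semantics ⊩• over the full powerset model M•, for every team (including ∅)
and every MT₀⁻-formula. -/
theorem team_semantics_eq_full_powerset_semantics (M : KModel) (X : Set M.W)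
    (φ : MTm) :
    M.sat X φ ↔ (fullPowModel M).bsat X φ := by
  induction φ generalizing X with
  | var p => exact Iff.rfl
  | bot => exact fullPowModel.isEnd_iff.symm
  | cneg α => exact fullPowModel.neg_iff (M.antitone_csat α) (csat_iff_cbsat M · α)
  | box φ ih => exact fullPowModel.box_iff (M.antitone_sat φ) ih
  | _ => simp only [KModel.sat, TriModel.bsat, fullPowModel, *]
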